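/- (Decoupling of S[U;δ] to the δ-RPDE.) Fix integers n, m and δ ∈ ℝ. Let U be a four times continuously differentiable real function and u1, u2 twice continuously differentiable real functions on an open set D ⊆ ℝ² where α ≠ β, ∂U/∂α ≠ 0 and ∂U/∂β ≠ 0, and suppose (U, u1, u2) satisfies the system S[U;δ] on D. Then on D: (i) u1 − u2 = (1/2)·((α−β)·U_{αβ}/(U_α·U_β) + m/U_β − n/U_α); and (ii) U satisfies the δ-RPDE: R(α,β,U;n,m) + 2δ²·U_α·U_β·(2·U_{αβ} − (U_α − U_β)/(α−β)) = 0. -/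

import Mathlib

/-- Partial derivative with respect to the first variable. -/
noncomputable def pda (f : ℝ × ℝ → ℝ) (p : ℝ × ℝ) : ℝ :=
  deriv (fun x => f (x, p.2)) p.1

/-- Partial derivative with respect to the second variable. -/
noncomputable def pdb (f : ℝ × ℝ → ℝ) (p : ℝ × ℝ) : ℝ :=
  deriv (fun y => f (p.1, y)) p.2

/-- The RPDE expression R(α,β,U;n,m). -/
noncomputable def Rexpr (n m : ℤ) (U : ℝ × ℝ → ℝ) (p : ℝ × ℝ) : ℝ :=
  let s := p.1 - p.2
  let Ua := pda U p
  let Ub := pdb U p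
  let Uaa := pda (pda U) p
  let Uab := pdb (pda U) p
  let Ubb := pdb (pdb U) p
  let Uaab := pdb (pda (pda U)) p
  let Uabb := pdb (pdb (pda U)) p
  let Uaabb := pdb (pdb (pda (pda U))) p ;
  (-Uaabb
    + Uaab * (1 / s + Ubb / Ub + Uab / Ua)
    + Uabb * (1 / (-s) + Uaa / Ua + Uab / Ub)
    - Uaa * Ubb * Uab / (Ua * Ub)
    + Uaa * ((n : ℝ) ^ 2 * Ub ^ 2 / (s ^ 2 * Ua ^ 2) - Uab / (s * Ua) - Uab ^ 2 / Ua ^ 2)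
    + Ubb * ((m : ℝ) ^ 2 * Ua ^ 2 / (s ^ 2 * Ub ^ 2) + Uab / (s * Ub) - Uab ^ 2 / Ub ^ 2)
    + ((n : ℝ) ^ 2 / (2 * s ^ 3)) * (Ub / Ua) * (Ua + Ub + 2 * (-s) * Uab)
    - ((m : ℝ) ^ 2 / (2 * s ^ 3)) * (Ua / Ub) * (Ua + Ub + 2 * s * Uab)
    + (1 / (2 * s)) * Uab ^ 2 * (1 / Ua - 1 / Ub))

/-- The system S[U;δ]. -/
def SUdelta (n m : ℤ) (δ : ℝ) (U u1 u2 : ℝ × ℝ → ℝ) (p : ℝ × ℝ) : Prop :=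
  pdb u1 p = ((u1 p - u2 p) / (p.1 - p.2)) * ((m : ℝ) - (u1 p - u2 p) * pdb U p)
      + (p.1 - p.2) * δ ^ 2 * pdb U p ∧
  pda u2 p = ((u1 p - u2 p) / (p.1 - p.2)) * ((n : ℝ) + (u1 p - u2 p) * pda U p)
      - (p.1 - p.2) * δ ^ 2 * pda U p ∧
  pdb (pda U) p = (1 / (p.1 - p.2)) *
      (2 * (u1 p - u2 p) * pda U p * pdb U p + (n : ℝ) * pdb U p - (m : ℝ) * pda U p)

/-!
Put `w = u1 - u2`. Equation (G3) is linear in `w`, which gives (i). Differentiating (G3) in `α`,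
in `β` and in `α` and `β` expresses `w_α`, `w_β` and `w_{αβ}` through the derivatives of `U`. On the
other hand, differentiating (G1) in `α` and (G2) in `β` computes `u1_{αβ}` and `u2_{αβ}` (here the
symmetry of mixed partials of `u1` is used), i.e. a second expression for
`w_{αβ} = u1_{αβ} - u2_{αβ}`. Comparing the two and eliminating `w`, `w_α`, `w_β` leaves exactly
the δ-RPDE.
-/

open Filter Topology Set

section PartialDerivatives

variable {f g : ℝ × ℝ → ℝ} {p : ℝ × ℝ} {D : Set (ℝ × ℝ)}

theorem hasDerivAt_pda (hf : DifferentiableAt ℝ f p) :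
    HasDerivAt (fun x => f (x, p.2)) (pda f p) p.1 :=
  (hf.comp p.1 (differentiableAt_id.prodMk (differentiableAt_const p.2))).hasDerivAt

theorem hasDerivAt_pdb (hf : DifferentiableAt ℝ f p) :
    HasDerivAt (fun y => f (p.1, y)) (pdb f p) p.2 :=
  (hf.comp p.2 ((differentiableAt_const p.1).prodMk differentiableAt_id)).hasDerivAt

theorem pda_eq_fderiv (hf : DifferentiableAt ℝ f p) : pda f p = fderiv ℝ f p (1, 0) :=
  (hf.hasFDerivAt.comp_hasDerivAt p.1 ((hasDerivAt_id p.1).prodMk (hasDerivAt_const p.1 p.2))).deriv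

theorem pdb_eq_fderiv (hf : DifferentiableAt ℝ f p) : pdb f p = fderiv ℝ f p (0, 1) :=
  (hf.hasFDerivAt.comp_hasDerivAt p.2 ((hasDerivAt_const p.2 p.1).prodMk (hasDerivAt_id p.2))).deriv

theorem ContDiffOn.differentiableAt_of_isOpen {n : WithTop ℕ∞} (hf : ContDiffOn ℝ n f D)
    (hD : IsOpen D) (hn : 1 ≤ n) (hp : p ∈ D) : DifferentiableAt ℝ f p :=
  (hf.contDiffAt (hD.mem_nhds hp)).differentiableAt (by rintro rfl; simp at hn)

theorem ContDiffOn.pda {n k : WithTop ℕ∞} (hf : ContDiffOn ℝ n f D) (hD : IsOpen D)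
    (hkn : k + 1 ≤ n) : ContDiffOn ℝ k (pda f) D :=
  ((hf.fderiv_of_isOpen hD hkn).clm_apply contDiffOn_const).congr fun _ hq =>
    pda_eq_fderiv (hf.differentiableAt_of_isOpen hD (le_add_self.trans hkn) hq)

theorem ContDiffOn.pdb {n k : WithTop ℕ∞} (hf : ContDiffOn ℝ n f D) (hD : IsOpen D)
    (hkn : k + 1 ≤ n) : ContDiffOn ℝ k (pdb f) D :=
  ((hf.fderiv_of_isOpen hD hkn).clm_apply contDiffOn_const).congr fun _ hq =>
    pdb_eq_fderiv (hf.differentiableAt_of_isOpen hD (le_add_self.trans hkn) hq)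

theorem Filter.EventuallyEq.comp_mk_left (h : f =ᶠ[𝓝 p] g) :
    (fun x => f (x, p.2)) =ᶠ[𝓝 p.1] fun x => g (x, p.2) :=
  h.comp_tendsto ((continuous_id.prodMk continuous_const).tendsto' _ _ rfl)

theorem Filter.EventuallyEq.comp_mk_right (h : f =ᶠ[𝓝 p] g) :
    (fun y => f (p.1, y)) =ᶠ[𝓝 p.2] fun y => g (p.1, y) :=
  h.comp_tendsto ((continuous_const.prodMk continuous_id).tendsto' _ _ rfl)

theorem Filter.EventuallyEq.pda_eq (h : f =ᶠ[𝓝 p] g) : pda f p = pda g p :=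
  h.comp_mk_left.deriv_eq

theorem Filter.EventuallyEq.pdb_eq (h : f =ᶠ[𝓝 p] g) : pdb f p = pdb g p :=
  h.comp_mk_right.deriv_eq

theorem pda_pdb_comm (hf : ContDiffAt ℝ 2 f p) : pda (pdb f) p = pdb (pda f) p := by
  have hdiff : ∀ᶠ q in 𝓝 p, DifferentiableAt ℝ f q :=
    (hf.eventually (by simp)).mono fun q hq => hq.differentiableAt two_ne_zero
  have hf' : DifferentiableAt ℝ (fderiv ℝ f) p :=
    (hf.fderiv_right (m := 1) le_rfl).differentiableAt one_ne_zero
  have hb : pdb f =ᶠ[𝓝 p] fun q => fderiv ℝ f q (0, 1) := hdiff.mono fun q => pdb_eq_fderiv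
  have ha : pda f =ᶠ[𝓝 p] fun q => fderiv ℝ f q (1, 0) := hdiff.mono fun q => pda_eq_fderiv
  rw [hb.pda_eq, ha.pdb_eq,
    pda_eq_fderiv (hf'.clm_apply (differentiableAt_const _)),
    pdb_eq_fderiv (hf'.clm_apply (differentiableAt_const _)),
    fderiv_clm_apply hf' (differentiableAt_const _), fderiv_clm_apply hf' (differentiableAt_const _)]
  simpa using (hf.isSymmSndFDerivAt (by simp)).eq (1, 0) (0, 1)

theorem Set.EqOn.hasDerivAt_fst_unique {f' g' : ℝ} (hfg : EqOn f g D) (hD : IsOpen D) (hp : p ∈ D)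
    (hf : HasDerivAt (fun x => f (x, p.2)) f' p.1) (hg : HasDerivAt (fun x => g (x, p.2)) g' p.1) :
    f' = g' :=
  hf.unique (hg.congr_of_eventuallyEq (hfg.eventuallyEq_of_mem (hD.mem_nhds hp)).comp_mk_left)

theorem Set.EqOn.hasDerivAt_snd_unique {f' g' : ℝ} (hfg : EqOn f g D) (hD : IsOpen D) (hp : p ∈ D)
    (hf : HasDerivAt (fun y => f (p.1, y)) f' p.2) (hg : HasDerivAt (fun y => g (p.1, y)) g' p.2) :
    f' = g' :=
  hf.unique (hg.congr_of_eventuallyEq (hfg.eventuallyEq_of_mem (hD.mem_nhds hp)).comp_mk_right)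

end PartialDerivatives

section SUdelta

variable {n m : ℤ} {δ : ℝ} {U u1 u2 : ℝ × ℝ → ℝ} {D : Set (ℝ × ℝ)} {p : ℝ × ℝ}

theorem SUdelta.sub_mul_pdb_pda (h : SUdelta n m δ U u1 u2 p) (hp : p.1 ≠ p.2) :
    (p.1 - p.2) * pdb (pda U) p
      = 2 * (u1 p - u2 p) * pda U p * pdb U p + n * pdb U p - m * pda U p := by
  rw [h.2.2]
  field_simp [sub_ne_zero.2 hp]

theorem SUdelta.sub_eq (h : SUdelta n m δ U u1 u2 p) (hp : p.1 ≠ p.2)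
    (ha : pda U p ≠ 0) (hb : pdb U p ≠ 0) :
    u1 p - u2 p = (1 / 2) * ((p.1 - p.2) * pdb (pda U) p / (pda U p * pdb U p)
      + m / pdb U p - n / pda U p) := by
  field_simp
  linear_combination -(h.sub_mul_pdb_pda hp)

theorem eqOn_sub_mul_pdb_pda (hαβ : ∀ q ∈ D, q.1 ≠ q.2)
    (hsys : ∀ q ∈ D, SUdelta n m δ U u1 u2 q) :
    EqOn (fun q => (q.1 - q.2) * pdb (pda U) q)
      (fun q => 2 * (u1 q - u2 q) * pda U q * pdb U q + n * pdb U q - m * pda U q) D :=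
  fun q hq => (hsys q hq).sub_mul_pdb_pda (hαβ q hq)

theorem pda_sub_mul_pdb_pda (hD : IsOpen D) (hαβ : ∀ q ∈ D, q.1 ≠ q.2)
    (hsys : ∀ q ∈ D, SUdelta n m δ U u1 u2 q) (hU : ContDiffOn ℝ 3 U D)
    (hu1 : DifferentiableOn ℝ u1 D) (hu2 : DifferentiableOn ℝ u2 D) (hp : p ∈ D) :
    pdb (pda U) p + (p.1 - p.2) * pdb (pda (pda U)) p
      = 2 * (pda u1 p - pda u2 p) * pda U p * pdb U p
        + 2 * (u1 p - u2 p) * (pda (pda U) p * pdb U p + pda U p * pdb (pda U) p)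
        + n * pdb (pda U) p - m * pda (pda U) p := by
  have hUa : ContDiffOn ℝ 2 (pda U) D := hU.pda hD (by norm_num)
  have hUb : ContDiffOn ℝ 2 (pdb U) D := hU.pdb hD (by norm_num)
  have hUab : ContDiffOn ℝ 1 (pdb (pda U)) D := hUa.pdb hD (by norm_num)
  have d1 := hasDerivAt_pda (hu1.differentiableAt (hD.mem_nhds hp))
  have d2 := hasDerivAt_pda (hu2.differentiableAt (hD.mem_nhds hp))
  have dUa := hasDerivAt_pda (hUa.differentiableAt_of_isOpen hD (by norm_num) hp)
  have dUb := hasDerivAt_pda (hUb.differentiableAt_of_isOpen hD (by norm_num) hp)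
  have dUab := hasDerivAt_pda (hUab.differentiableAt_of_isOpen hD le_rfl hp)
  have key := (eqOn_sub_mul_pdb_pda hαβ hsys).hasDerivAt_fst_unique hD hp
    (((hasDerivAt_id' p.1).sub_const p.2).mul dUab)
    (((((d1.sub d2).const_mul 2).mul dUa).mul dUb).add (dUb.const_mul (n : ℝ)) |>.sub
      (dUa.const_mul (m : ℝ)))
  rw [pda_pdb_comm ((hU.contDiffAt (hD.mem_nhds hp)).of_le (by norm_num)),
    pda_pdb_comm (hUa.contDiffAt (hD.mem_nhds hp))] at key
  simp only [Pi.mul_apply, Pi.sub_apply, Prod.mk.eta] at key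
  linear_combination key

theorem pdb_sub_mul_pdb_pda (hD : IsOpen D) (hαβ : ∀ q ∈ D, q.1 ≠ q.2)
    (hsys : ∀ q ∈ D, SUdelta n m δ U u1 u2 q) (hU : ContDiffOn ℝ 3 U D)
    (hu1 : DifferentiableOn ℝ u1 D) (hu2 : DifferentiableOn ℝ u2 D) (hp : p ∈ D) :
    -pdb (pda U) p + (p.1 - p.2) * pdb (pdb (pda U)) p
      = 2 * (pdb u1 p - pdb u2 p) * pda U p * pdb U p
        + 2 * (u1 p - u2 p) * (pdb (pda U) p * pdb U p + pda U p * pdb (pdb U) p)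
        + n * pdb (pdb U) p - m * pdb (pda U) p := by
  have hUa : ContDiffOn ℝ 2 (pda U) D := hU.pda hD (by norm_num)
  have hUb : ContDiffOn ℝ 2 (pdb U) D := hU.pdb hD (by norm_num)
  have hUab : ContDiffOn ℝ 1 (pdb (pda U)) D := hUa.pdb hD (by norm_num)
  have d1 := hasDerivAt_pdb (hu1.differentiableAt (hD.mem_nhds hp))
  have d2 := hasDerivAt_pdb (hu2.differentiableAt (hD.mem_nhds hp))
  have dUa := hasDerivAt_pdb (hUa.differentiableAt_of_isOpen hD (by norm_num) hp)
  have dUb := hasDerivAt_pdb (hUb.differentiableAt_of_isOpen hD (by norm_num) hp)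
  have dUab := hasDerivAt_pdb (hUab.differentiableAt_of_isOpen hD le_rfl hp)
  have key := (eqOn_sub_mul_pdb_pda hαβ hsys).hasDerivAt_snd_unique hD hp
    (((hasDerivAt_const p.2 p.1).sub (hasDerivAt_id' p.2)).mul dUab)
    (((((d1.sub d2).const_mul 2).mul dUa).mul dUb).add (dUb.const_mul (n : ℝ)) |>.sub
      (dUa.const_mul (m : ℝ)))
  simp only [Pi.mul_apply, Pi.sub_apply, Prod.mk.eta] at key
  linear_combination key

theorem pdb_pda_sub_mul_pdb_pda (hD : IsOpen D) (hαβ : ∀ q ∈ D, q.1 ≠ q.2)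
    (hsys : ∀ q ∈ D, SUdelta n m δ U u1 u2 q) (hU : ContDiffOn ℝ 4 U D)
    (hu1 : ContDiffOn ℝ 2 u1 D) (hu2 : ContDiffOn ℝ 2 u2 D) (hp : p ∈ D) :
    pdb (pdb (pda U)) p - pdb (pda (pda U)) p + (p.1 - p.2) * pdb (pdb (pda (pda U))) p
      = 2 * (pdb (pda u1) p - pdb (pda u2) p) * pda U p * pdb U p
        + 2 * (pda u1 p - pda u2 p) * (pdb (pda U) p * pdb U p + pda U p * pdb (pdb U) p)
        + 2 * (pdb u1 p - pdb u2 p) * (pda (pda U) p * pdb U p + pda U p * pdb (pda U) p)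
        + 2 * (u1 p - u2 p) * (pdb (pda (pda U)) p * pdb U p + pda (pda U) p * pdb (pdb U) p
            + pdb (pda U) p ^ 2 + pda U p * pdb (pdb (pda U)) p)
        + n * pdb (pdb (pda U)) p - m * pdb (pda (pda U)) p := by
  have hG3α : EqOn (fun q => pdb (pda U) q + (q.1 - q.2) * pdb (pda (pda U)) q)
      (fun q => 2 * (pda u1 q - pda u2 q) * pda U q * pdb U q
        + 2 * (u1 q - u2 q) * (pda (pda U) q * pdb U q + pda U q * pdb (pda U) q)
        + n * pdb (pda U) q - m * pda (pda U) q) D := fun q hq =>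
    pda_sub_mul_pdb_pda hD hαβ hsys (hU.of_le (by norm_num))
      (hu1.differentiableOn two_ne_zero) (hu2.differentiableOn two_ne_zero) hq
  have hUa : ContDiffOn ℝ 3 (pda U) D := hU.pda hD (by norm_num)
  have hUb : ContDiffOn ℝ 3 (pdb U) D := hU.pdb hD (by norm_num)
  have hUaa : ContDiffOn ℝ 2 (pda (pda U)) D := hUa.pda hD (by norm_num)
  have hUab : ContDiffOn ℝ 2 (pdb (pda U)) D := hUa.pdb hD (by norm_num)
  have hUaab : ContDiffOn ℝ 1 (pdb (pda (pda U))) D := hUaa.pdb hD (by norm_num)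
  have d1 := hasDerivAt_pdb (hu1.differentiableAt_of_isOpen hD (by norm_num) hp)
  have d2 := hasDerivAt_pdb (hu2.differentiableAt_of_isOpen hD (by norm_num) hp)
  have d1a := hasDerivAt_pdb ((hu1.pda hD le_rfl).differentiableAt_of_isOpen hD le_rfl hp)
  have d2a := hasDerivAt_pdb ((hu2.pda hD le_rfl).differentiableAt_of_isOpen hD le_rfl hp)
  have dUa := hasDerivAt_pdb (hUa.differentiableAt_of_isOpen hD (by norm_num) hp)
  have dUb := hasDerivAt_pdb (hUb.differentiableAt_of_isOpen hD (by norm_num) hp)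
  have dUaa := hasDerivAt_pdb (hUaa.differentiableAt_of_isOpen hD (by norm_num) hp)
  have dUab := hasDerivAt_pdb (hUab.differentiableAt_of_isOpen hD (by norm_num) hp)
  have dUaab := hasDerivAt_pdb (hUaab.differentiableAt_of_isOpen hD le_rfl hp)
  have key := hG3α.hasDerivAt_snd_unique hD hp
    (dUab.add (((hasDerivAt_const p.2 p.1).sub (hasDerivAt_id' p.2)).mul dUaab))
    ((((((d1a.sub d2a).const_mul 2).mul dUa).mul dUb).add
      (((d1.sub d2).const_mul 2).mul ((dUaa.mul dUb).add (dUa.mul dUab)))).add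
      (dUab.const_mul (n : ℝ)) |>.sub (dUaa.const_mul (m : ℝ)))
  simp only [Pi.add_apply, Pi.mul_apply, Pi.sub_apply, Prod.mk.eta] at key
  linear_combination key

theorem sq_mul_pdb_pda_u1 (hD : IsOpen D) (hαβ : ∀ q ∈ D, q.1 ≠ q.2)
    (hsys : ∀ q ∈ D, SUdelta n m δ U u1 u2 q) (hU : ContDiffOn ℝ 2 U D)
    (hu1 : ContDiffOn ℝ 2 u1 D) (hu2 : DifferentiableOn ℝ u2 D) (hp : p ∈ D) :
    (p.1 - p.2) ^ 2 * pdb (pda u1) p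
      = ((pda u1 p - pda u2 p) * (p.1 - p.2) - (u1 p - u2 p)) * (m - (u1 p - u2 p) * pdb U p)
        - (u1 p - u2 p) * (p.1 - p.2) * ((pda u1 p - pda u2 p) * pdb U p
            + (u1 p - u2 p) * pdb (pda U) p)
        + (p.1 - p.2) ^ 2 * δ ^ 2 * pdb U p + (p.1 - p.2) ^ 3 * δ ^ 2 * pdb (pda U) p := by
  have hG1 : EqOn (pdb u1) (fun q => (u1 q - u2 q) / (q.1 - q.2) * (m - (u1 q - u2 q) * pdb U q)
      + (q.1 - q.2) * δ ^ 2 * pdb U q) D := fun q hq => (hsys q hq).1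
  have hs : p.1 - p.2 ≠ 0 := sub_ne_zero.2 (hαβ p hp)
  have d1 := hasDerivAt_pda (hu1.differentiableAt_of_isOpen hD (by norm_num) hp)
  have d2 := hasDerivAt_pda (hu2.differentiableAt (hD.mem_nhds hp))
  have d1b := hasDerivAt_pda ((hu1.pdb hD le_rfl).differentiableAt_of_isOpen hD le_rfl hp)
  have dUb := hasDerivAt_pda ((hU.pdb hD le_rfl).differentiableAt_of_isOpen hD le_rfl hp)
  have hx := (hasDerivAt_id' p.1).sub_const p.2
  have key := hG1.hasDerivAt_fst_unique hD hp d1b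
    ((((d1.sub d2).div hx hs).mul ((hasDerivAt_const p.1 (m : ℝ)).sub ((d1.sub d2).mul dUb))).add
      ((hx.mul_const (δ ^ 2)).mul dUb))
  rw [pda_pdb_comm (hu1.contDiffAt (hD.mem_nhds hp)),
    pda_pdb_comm (hU.contDiffAt (hD.mem_nhds hp))] at key
  simp only [Pi.sub_apply, Pi.mul_apply, Pi.div_apply, Prod.mk.eta] at key
  rw [key]
  field_simp
  ring

theorem sq_mul_pdb_pda_u2 (hD : IsOpen D) (hαβ : ∀ q ∈ D, q.1 ≠ q.2)
    (hsys : ∀ q ∈ D, SUdelta n m δ U u1 u2 q) (hU : ContDiffOn ℝ 2 U D)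
    (hu1 : DifferentiableOn ℝ u1 D) (hu2 : ContDiffOn ℝ 2 u2 D) (hp : p ∈ D) :
    (p.1 - p.2) ^ 2 * pdb (pda u2) p
      = ((pdb u1 p - pdb u2 p) * (p.1 - p.2) + (u1 p - u2 p)) * (n + (u1 p - u2 p) * pda U p)
        + (u1 p - u2 p) * (p.1 - p.2) * ((pdb u1 p - pdb u2 p) * pda U p
            + (u1 p - u2 p) * pdb (pda U) p)
        + (p.1 - p.2) ^ 2 * δ ^ 2 * pda U p - (p.1 - p.2) ^ 3 * δ ^ 2 * pdb (pda U) p := by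
  have hG2 : EqOn (pda u2) (fun q => (u1 q - u2 q) / (q.1 - q.2) * (n + (u1 q - u2 q) * pda U q)
      - (q.1 - q.2) * δ ^ 2 * pda U q) D := fun q hq => (hsys q hq).2.1
  have hs : p.1 - p.2 ≠ 0 := sub_ne_zero.2 (hαβ p hp)
  have d1 := hasDerivAt_pdb (hu1.differentiableAt (hD.mem_nhds hp))
  have d2 := hasDerivAt_pdb (hu2.differentiableAt_of_isOpen hD (by norm_num) hp)
  have d2a := hasDerivAt_pdb ((hu2.pda hD le_rfl).differentiableAt_of_isOpen hD le_rfl hp)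
  have dUa := hasDerivAt_pdb ((hU.pda hD le_rfl).differentiableAt_of_isOpen hD le_rfl hp)
  have hy := (hasDerivAt_const p.2 p.1).sub (hasDerivAt_id' p.2)
  have key := hG2.hasDerivAt_snd_unique hD hp d2a
    ((((d1.sub d2).div hy hs).mul ((hasDerivAt_const p.2 (n : ℝ)).add ((d1.sub d2).mul dUa))).sub
      ((hy.mul_const (δ ^ 2)).mul dUa))
  simp only [Pi.add_apply, Pi.sub_apply, Pi.mul_apply, Pi.div_apply, Prod.mk.eta] at key
  rw [key]
  field_simp
  ring

end SUdelta

theorem rexpr_add_eq_zero_of_compatibility {n m : ℤ} {δ : ℝ} {U : ℝ × ℝ → ℝ} {p : ℝ × ℝ}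
    {w wα wβ u1αβ u2αβ : ℝ} (hs : p.1 - p.2 ≠ 0) (ha : pda U p ≠ 0) (hb : pdb U p ≠ 0)
    (hG3 : (p.1 - p.2) * pdb (pda U) p
      = 2 * w * pda U p * pdb U p + n * pdb U p - m * pda U p)
    (hG3α : pdb (pda U) p + (p.1 - p.2) * pdb (pda (pda U)) p
      = 2 * wα * pda U p * pdb U p + 2 * w * (pda (pda U) p * pdb U p + pda U p * pdb (pda U) p)
        + n * pdb (pda U) p - m * pda (pda U) p)
    (hG3β : -pdb (pda U) p + (p.1 - p.2) * pdb (pdb (pda U)) p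
      = 2 * wβ * pda U p * pdb U p + 2 * w * (pdb (pda U) p * pdb U p + pda U p * pdb (pdb U) p)
        + n * pdb (pdb U) p - m * pdb (pda U) p)
    (hG3αβ : pdb (pdb (pda U)) p - pdb (pda (pda U)) p + (p.1 - p.2) * pdb (pdb (pda (pda U))) p
      = 2 * (u1αβ - u2αβ) * pda U p * pdb U p
        + 2 * wα * (pdb (pda U) p * pdb U p + pda U p * pdb (pdb U) p)
        + 2 * wβ * (pda (pda U) p * pdb U p + pda U p * pdb (pda U) p)
        + 2 * w * (pdb (pda (pda U)) p * pdb U p + pda (pda U) p * pdb (pdb U) p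
            + pdb (pda U) p ^ 2 + pda U p * pdb (pdb (pda U)) p)
        + n * pdb (pdb (pda U)) p - m * pdb (pda (pda U)) p)
    (hG1α : (p.1 - p.2) ^ 2 * u1αβ
      = (wα * (p.1 - p.2) - w) * (m - w * pdb U p)
        - w * (p.1 - p.2) * (wα * pdb U p + w * pdb (pda U) p)
        + (p.1 - p.2) ^ 2 * δ ^ 2 * pdb U p + (p.1 - p.2) ^ 3 * δ ^ 2 * pdb (pda U) p)
    (hG2β : (p.1 - p.2) ^ 2 * u2αβ
      = (wβ * (p.1 - p.2) + w) * (n + w * pda U p)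
        + w * (p.1 - p.2) * (wβ * pda U p + w * pdb (pda U) p)
        + (p.1 - p.2) ^ 2 * δ ^ 2 * pda U p - (p.1 - p.2) ^ 3 * δ ^ 2 * pdb (pda U) p) :
    Rexpr n m U p + 2 * δ ^ 2 * pda U p * pdb U p *
      (2 * pdb (pda U) p - (pda U p - pdb U p) / (p.1 - p.2)) = 0 := by
  unfold Rexpr
  generalize pdb (pdb (pda (pda U))) p = Uaabb at *
  generalize pdb (pdb (pda U)) p = Uabb at *
  generalize pdb (pda (pda U)) p = Uaab at *
  generalize pdb (pdb U) p = Ubb at *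
  generalize pdb (pda U) p = Uab at *
  generalize pda (pda U) p = Uaa at *
  generalize pda U p = Ua at *
  generalize pdb U p = Ub at *
  generalize p.1 - p.2 = s at *
  obtain rfl : u1αβ = ((wα * s - w) * (m - w * Ub) - w * s * (wα * Ub + w * Uab)
      + s ^ 2 * δ ^ 2 * Ub + s ^ 3 * δ ^ 2 * Uab) / s ^ 2 := by
    rw [eq_div_iff (by simp [hs])]; linear_combination hG1α
  obtain rfl : u2αβ = ((wβ * s + w) * (n + w * Ua) + w * s * (wβ * Ua + w * Uab)
      + s ^ 2 * δ ^ 2 * Ua - s ^ 3 * δ ^ 2 * Uab) / s ^ 2 := by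
    rw [eq_div_iff (by simp [hs])]; linear_combination hG2β
  obtain rfl : wα = (Uab + s * Uaab - 2 * w * (Uaa * Ub + Ua * Uab) - n * Uab + m * Uaa)
      / (2 * Ua * Ub) := by
    rw [eq_div_iff (by simp [ha, hb])]; linear_combination -hG3α
  obtain rfl : wβ = (-Uab + s * Uabb - 2 * w * (Uab * Ub + Ua * Ubb) - n * Ubb + m * Uab)
      / (2 * Ua * Ub) := by
    rw [eq_div_iff (by simp [ha, hb])]; linear_combination -hG3β
  obtain rfl : w = (s * Uab - n * Ub + m * Ua) / (2 * Ua * Ub) := by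
    rw [eq_div_iff (by simp [ha, hb])]; linear_combination -hG3
  -- With everything else eliminated, the δ-RPDE expression is `-1 / (α - β)` times the
  -- defect of the αβ-derivative of (G3).
  linear_combination (norm := skip) (-1 / s) * hG3αβ
  field_simp
  ring

/-- Decoupling of S[U;δ] to the δ-RPDE. -/
theorem SUdelta_decouples_to_deltaRPDE
    (n m : ℤ) (δ : ℝ) (U u1 u2 : ℝ × ℝ → ℝ)
    (D : Set (ℝ × ℝ)) (hD : IsOpen D)
    (hαβ : ∀ p ∈ D, p.1 ≠ p.2)
    (hUa : ∀ p ∈ D, pda U p ≠ 0) (hUb : ∀ p ∈ D, pdb U p ≠ 0)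
    (hU : ContDiffOn ℝ 4 U D)
    (hu1 : ContDiffOn ℝ 2 u1 D) (hu2 : ContDiffOn ℝ 2 u2 D)
    (hsys : ∀ p ∈ D, SUdelta n m δ U u1 u2 p) :
    ∀ p ∈ D,
      u1 p - u2 p = (1 / 2) * ((p.1 - p.2) * pdb (pda U) p / (pda U p * pdb U p)
          + (m : ℝ) / pdb U p - (n : ℝ) / pda U p) ∧
      Rexpr n m U p + 2 * δ ^ 2 * pda U p * pdb U p *
          (2 * pdb (pda U) p - (pda U p - pdb U p) / (p.1 - p.2)) = 0 := by
  intro p hp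
  refine ⟨(hsys p hp).sub_eq (hαβ p hp) (hUa p hp) (hUb p hp), ?_⟩
  have hU3 : ContDiffOn ℝ 3 U D := hU.of_le (by norm_num)
  have hU2 : ContDiffOn ℝ 2 U D := hU.of_le (by norm_num)
  have hu1' : DifferentiableOn ℝ u1 D := hu1.differentiableOn two_ne_zero
  have hu2' : DifferentiableOn ℝ u2 D := hu2.differentiableOn two_ne_zero
  exact rexpr_add_eq_zero_of_compatibility (sub_ne_zero.2 (hαβ p hp)) (hUa p hp) (hUb p hp)
    ((hsys p hp).sub_mul_pdb_pda (hαβ p hp))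
    (pda_sub_mul_pdb_pda hD hαβ hsys hU3 hu1' hu2' hp)
    (pdb_sub_mul_pdb_pda hD hαβ hsys hU3 hu1' hu2' hp)
    (pdb_pda_sub_mul_pdb_pda hD hαβ hsys hU hu1 hu2 hp)
    (sq_mul_pdb_pda_u1 hD hαβ hsys hU2 hu1 hu2' hp)
    (sq_mul_pdb_pda_u2 hD hαβ hsys hU2 hu1' hu2 hp)
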